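/- arXiv:1310.6643 — 3 statements merged into one kernel-verified Lean document; each statement's English description precedes it below -/
import Mathlib

section
/- Let (Ω, 𝔉, P) be a probability space, 𝔪 ⊆ 𝔉 a sub-σ-algebra, W an ℝ^d-valued random vector with E‖W‖² < ∞, and B an ℝ^d-valued random vector such that B and every entry of W W'B are integrable. Set Y = ⟨W, B⟩ and suppose W and B are conditionally independent given 𝔪. Let A ∈ 𝔪 be an event on which the d×d conditional second-moment matrix P := E[W W' | 𝔪] (taken entrywise) is almost surely invertible. Then, almost surely on A, E[B | 𝔪] = P⁻¹ E[W Y | 𝔪]. In particular, taking 𝔪 = σ(R) for the conditional-rank vector R and A = {R ∈ 𝓡}, the conditional mean β(r) := E[B | R = r] satisfies β(r) = E[W W' | R = r]⁻¹ E[W Y | R = r] for almost every r ∈ 𝓡, so both β(r) and β_𝓡 := E[B | R ∈ 𝓡] are determined by the joint distribution of the observables (Y, W, R). -/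
open MeasureTheory ProbabilityTheory
open scoped ENNReal

lemma countable_generatePiSystem {α : Type*} {S : Set (Set α)} (hS : S.Countable) :
    (generatePiSystem S).Countable := by
  refine Set.Countable.mono ?_ ((Set.countable_setOf_finite_subset hS).image Set.sInter)
  intro s hs
  induction hs with
  | base h =>
      exact ⟨{_}, ⟨Set.finite_singleton _, Set.singleton_subset_iff.2 h⟩,
        Set.sInter_singleton _⟩
  | inter h1 h2 hne ih1 ih2 =>
      obtain ⟨T1, hT1, rfl⟩ := ih1
      obtain ⟨T2, hT2, rfl⟩ := ih2
      exact ⟨T1 ∪ T2, ⟨hT1.1.union hT2.1, Set.union_subset hT1.2 hT2.2⟩,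
        Set.sInter_union _ _⟩

/-- Conditional independence upgrades to a.e. independence under the conditional
expectation kernel, when the codomains are countably generated. -/
lemma ae_indepFun_of_condIndepFun {Ω α β : Type*} [mΩ : MeasurableSpace Ω]
    [StandardBorelSpace Ω] [Nonempty Ω]
    [mα : MeasurableSpace α] [MeasurableSpace.CountablyGenerated α]
    [mβ : MeasurableSpace β] [MeasurableSpace.CountablyGenerated β]
    (μ : Measure Ω) [IsProbabilityMeasure μ]
    (m : MeasurableSpace Ω) (hm : m ≤ mΩ)
    {f : Ω → α} {g : Ω → β} (hf : @Measurable Ω α mΩ mα f) (hg : @Measurable Ω β mΩ mβ g)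
    (h : CondIndepFun m hm f g μ) :
    ∀ᵐ ω ∂μ, IndepFun f g (condExpKernel (mΩ := mΩ) μ m ω) := by
  set κ := condExpKernel (mΩ := mΩ) μ m with hκ
  set C : Set (Set α) := generatePiSystem (MeasurableSpace.countableGeneratingSet α) with hC
  set D : Set (Set β) := generatePiSystem (MeasurableSpace.countableGeneratingSet β) with hD
  have hCc : C.Countable :=
    countable_generatePiSystem MeasurableSpace.countable_countableGeneratingSet
  have hDc : D.Countable :=
    countable_generatePiSystem MeasurableSpace.countable_countableGeneratingSet
  have hCm : ∀ s ∈ C, MeasurableSet s :=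
    fun s hs => generatePiSystem_measurableSet
      (fun t ht => MeasurableSpace.measurableSet_countableGeneratingSet ht) s hs
  have hDm : ∀ s ∈ D, MeasurableSet s :=
    fun s hs => generatePiSystem_measurableSet
      (fun t ht => MeasurableSpace.measurableSet_countableGeneratingSet ht) s hs
  have hgenC : mα = MeasurableSpace.generateFrom C := by
    rw [hC, generateFrom_generatePiSystem_eq,
      MeasurableSpace.generateFrom_countableGeneratingSet]
  have hgenD : mβ = MeasurableSpace.generateFrom D := by
    rw [hD, generateFrom_generatePiSystem_eq,
      MeasurableSpace.generateFrom_countableGeneratingSet]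
  rw [CondIndepFun, Kernel.IndepFun, Kernel.Indep, Kernel.IndepSets] at h
  have key : ∀ᵐ ω ∂μ, ∀ s ∈ C, ∀ t ∈ D,
      κ ω (f ⁻¹' s ∩ g ⁻¹' t) = κ ω (f ⁻¹' s) * κ ω (g ⁻¹' t) := by
    rw [ae_ball_iff hCc]
    intro s hs
    rw [ae_ball_iff hDc]
    intro t ht
    exact ae_of_ae_trim hm (h _ _ ⟨s, hCm s hs, rfl⟩ ⟨t, hDm t ht, rfl⟩)
  filter_upwards [key] with ω hω
  haveI : IsProbabilityMeasure (κ ω) := inferInstance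
  have hsets : IndepSets {s : Set Ω | ∃ t ∈ C, f ⁻¹' t = s}
      {s : Set Ω | ∃ t ∈ D, g ⁻¹' t = s} (κ ω) := by
    rintro t1 t2 ⟨s, hs, rfl⟩ ⟨t, ht, rfl⟩
    refine Filter.Eventually.of_forall fun _ => ?_
    simp only [Kernel.const_apply]
    exact hω s hs t ht
  have hindep : Indep (MeasurableSpace.comap f mα) (MeasurableSpace.comap g mβ) (κ ω) := by
    refine IndepSets.indep hf.comap_le hg.comap_le
      ((isPiSystem_generatePiSystem _).comap f) ((isPiSystem_generatePiSystem _).comap g)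
      ?_ ?_ hsets
    · conv_lhs => rw [hgenC]
      rw [MeasurableSpace.comap_generateFrom]
      rfl
    · conv_lhs => rw [hgenD]
      rw [MeasurableSpace.comap_generateFrom]
      rfl
  exact hindep

/-- In the CRC model `Y = ⟨W, B⟩`, if `W` and `B` are conditionally
independent given a sub-σ-algebra `𝔪` (e.g. `𝔪 = σ(R)` for the conditional-rank vector),
then almost surely on any `𝔪`-measurable event `A` on which the conditional second-moment
matrix `P = E[W W' | 𝔪]` is invertible, `E[B | 𝔪] = P⁻¹ E[W Y | 𝔪]`. -/
theorem crc_identification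
    {Ω : Type*} (m : MeasurableSpace Ω) [mΩ : MeasurableSpace Ω] [StandardBorelSpace Ω] [Nonempty Ω]
    (μ : Measure Ω) [IsProbabilityMeasure μ]
    (hm : m ≤ mΩ)
    {d : ℕ} (W B : Ω → Fin d → ℝ)
    (hWmeas : Measurable W) (hBmeas : Measurable B)
    (hW2 : MemLp W 2 μ)
    (hBint : ∀ i, Integrable (fun ω => B ω i) μ)
    (hWWB : ∀ a b c, Integrable (fun ω => W ω a * W ω b * B ω c) μ)
    (Y : Ω → ℝ) (hY : Y = fun ω => ∑ i, W ω i * B ω i)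
    (hindep : CondIndepFun m hm W B μ)
    (P : Ω → Matrix (Fin d) (Fin d) ℝ)
    (hP : ∀ a b, (fun ω => P ω a b) =ᵐ[μ] μ[fun ω => W ω a * W ω b | m])
    (A : Set Ω) (hA : MeasurableSet[m] A)
    (hinv : ∀ᵐ ω ∂μ, ω ∈ A → IsUnit (P ω)) :
    ∀ᵐ ω ∂μ, ω ∈ A →
      (fun i => (μ[fun ω' => B ω' i | m]) ω)
        = (P ω)⁻¹.mulVec (fun i => (μ[fun ω' => W ω' i * Y ω' | m]) ω) := by
  have hWm : @Measurable Ω (Fin d → ℝ) mΩ _ W := hWmeas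
  have hBm : @Measurable Ω (Fin d → ℝ) mΩ _ B := hBmeas
  -- coordinates of W are in L²
  have hWa : ∀ a, MemLp (fun ω => W ω a) 2 μ := fun a =>
    hW2.of_le (Measurable.aestronglyMeasurable
        (show @Measurable Ω ℝ mΩ _ fun ω => W ω a from (measurable_pi_apply a).comp hWm))
      (Filter.Eventually.of_forall fun ω => norm_le_pi_norm (W ω) a)
  have hWW : ∀ a b, Integrable (fun ω => W ω a * W ω b) μ := by
    intro a b
    have hg : Integrable (fun ω => W ω a ^ 2 + W ω b ^ 2) μ :=
      (hWa a).integrable_sq.add (hWa b).integrable_sq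
    refine hg.mono' (Measurable.aestronglyMeasurable
        (show @Measurable Ω ℝ mΩ _ fun ω => W ω a * W ω b from
          ((measurable_pi_apply a).comp hWm).mul ((measurable_pi_apply b).comp hWm)))
      (Filter.Eventually.of_forall fun ω => ?_)
    rw [Real.norm_eq_abs, abs_mul]
    nlinarith [sq_nonneg (|W ω a| - |W ω b|), sq_abs (W ω a), sq_abs (W ω b),
      abs_nonneg (W ω a), abs_nonneg (W ω b)]
  -- a.e. independence under the conditional expectation kernel
  have hae := ae_indepFun_of_condIndepFun (mΩ := mΩ) μ m hm hWm hBm hindep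
  -- product formula for conditional expectations
  have hprod : ∀ a b c, (μ[fun ω' => W ω' a * W ω' b * B ω' c | m]) =ᵐ[μ]
      fun ω => (μ[fun ω' => W ω' a * W ω' b | m]) ω * (μ[fun ω' => B ω' c | m]) ω := by
    intro a b c
    have h1 := condExp_ae_eq_integral_condExpKernel (mΩ := mΩ) hm (hWWB a b c)
    have h2 := condExp_ae_eq_integral_condExpKernel (mΩ := mΩ) hm (hWW a b)
    have h3 := condExp_ae_eq_integral_condExpKernel (mΩ := mΩ) hm (hBint c)
    filter_upwards [h1, h2, h3, hae] with ω e1 e2 e3 hω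
    rw [e1, e2, e3]
    have hind := hω.comp ((measurable_pi_apply a).mul (measurable_pi_apply b))
      (measurable_pi_apply c)
    have hmul := hind.integral_fun_mul_eq_mul_integral
      ((((measurable_pi_apply a).mul (measurable_pi_apply b)).comp hWm).aestronglyMeasurable)
      (((measurable_pi_apply c).comp hBm).aestronglyMeasurable)
    simpa [Function.comp] using hmul
  -- conditional expectation of W_a Y as a sum
  have hWYsum : ∀ a, (μ[fun ω' => W ω' a * Y ω' | m]) =ᵐ[μ]
      fun ω => ∑ b, (μ[fun ω' => W ω' a * W ω' b * B ω' b | m]) ω := by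
    intro a
    have heq : (fun ω' => W ω' a * Y ω')
        = ∑ b : Fin d, fun ω' => W ω' a * W ω' b * B ω' b := by
      funext ω'
      rw [hY]
      simp only [Finset.sum_apply, Finset.mul_sum]
      exact Finset.sum_congr rfl fun b _ => (mul_assoc _ _ _).symm
    rw [heq]
    have h := condExp_finsetSum (μ := μ) (m := m)
      (f := fun b ω' => W ω' a * W ω' b * B ω' b) (s := Finset.univ)
      (fun b _ => hWWB a b b)
    filter_upwards [h] with ω hω
    rw [hω]
    simp
  -- gather a.e. statements
  have hPall : ∀ᵐ ω ∂μ, ∀ a b, P ω a b = (μ[fun ω' => W ω' a * W ω' b | m]) ω :=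
    ae_all_iff.2 fun a => ae_all_iff.2 fun b => hP a b
  have hprodall : ∀ᵐ ω ∂μ, ∀ a b,
      (μ[fun ω' => W ω' a * W ω' b * B ω' b | m]) ω
        = (μ[fun ω' => W ω' a * W ω' b | m]) ω * (μ[fun ω' => B ω' b | m]) ω :=
    ae_all_iff.2 fun a => ae_all_iff.2 fun b => hprod a b b
  have hsumall : ∀ᵐ ω ∂μ, ∀ a,
      (μ[fun ω' => W ω' a * Y ω' | m]) ω
        = ∑ b, (μ[fun ω' => W ω' a * W ω' b * B ω' b | m]) ω :=
    ae_all_iff.2 fun a => hWYsum a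
  filter_upwards [hinv, hPall, hprodall, hsumall] with ω hinvω hPω hprodω hsumω hmem
  have hdet : IsUnit (P ω).det := (Matrix.isUnit_iff_isUnit_det _).mp (hinvω hmem)
  have hu : (fun i => (μ[fun ω' => W ω' i * Y ω' | m]) ω)
      = (P ω).mulVec (fun i => (μ[fun ω' => B ω' i | m]) ω) := by
    funext a
    simp only [Matrix.mulVec, dotProduct]
    rw [hsumω a]
    exact Finset.sum_congr rfl fun b _ => by rw [hprodω a b, hPω a b]
  rw [hu, Matrix.mulVec_mulVec, Matrix.nonsing_inv_mul _ hdet, Matrix.one_mulVec]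
end

section
/- Let B be an integrable ℝ^{d_w}-valued random vector and let R and X̃ be random vectors on the same probability space such that B and X̃ are conditionally independent given σ(R). Then almost surely E[B | σ(X̃)] = E[ E[B | σ(R)] | σ(X̃) ]; that is, E[B | σ(X̃, R)] = E[B | σ(R)] almost surely, and the tower property yields the displayed identity. Consequently, in the CRC model under Assumptions I with X̃ = (X₁,…,X_{d_b}) the vector of basic endogenous variables and R the conditional-rank vector, the 'average effect of treatment on the treated' E[B | X̃ = x] equals the average of β(F_{X₁|Z}(x₁|z),…,F_{X_{d_b}|Z}(x_{d_b}|z)) over the conditional distribution of Z given X̃ = x, where β(r) = E[B | R = r]; it is therefore point identified for any x such that (F_{X₁|Z}(x₁|z),…,F_{X_{d_b}|Z}(x_{d_b}|z)) ∈ 𝓡 for all z in the support of Z given X̃ = x. -/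
/-!
Write `m₁ = σ(B)`, `m₂ = σ(X̃)`, `m' = σ(R)`. Since `m₂ ⊔ m'` is generated by the π-system of
rectangles `A ∩ C` (`A ∈ m₂`, `C ∈ m'`), it suffices to show that an `m₁`-measurable `f` and
`E[f | m']` have the same integral over each rectangle. For `f = 1_t` this is the product formula
`E[1_{t ∩ A} | m'] = E[1_t | m'] E[1_A | m']` integrated over `C`. Exchanging the roles of `m₁` and
`m₂`, the indicator case gives `E[1_A | m₁ ⊔ m'] = E[1_A | m']`, which handles a general `f`:
`∫_C f 1_A = ∫_C f E[1_A | m']`, and the bounded `m'`-measurable factor `E[1_A | m']` can be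
moved onto `f` to turn `f` into `E[f | m']`. The second identity is then the tower property.
-/

open MeasureTheory ProbabilityTheory MeasurableSpace Set

section PiSystem

variable {Ω : Type*}

lemma isPiSystem_image2_inter (m₁ m₂ : MeasurableSpace Ω) :
    IsPiSystem (image2 (· ∩ ·) {s | MeasurableSet[m₁] s} {s | MeasurableSet[m₂] s}) := by
  rintro _ ⟨A₁, hA₁, C₁, hC₁, rfl⟩ _ ⟨A₂, hA₂, C₂, hC₂, rfl⟩ -
  exact ⟨A₁ ∩ A₂, hA₁.inter hA₂, C₁ ∩ C₂, hC₁.inter hC₂, inter_inter_inter_comm _ _ _ _⟩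

lemma generateFrom_image2_inter (m₁ m₂ : MeasurableSpace Ω) :
    generateFrom (image2 (· ∩ ·) {s | MeasurableSet[m₁] s} {s | MeasurableSet[m₂] s})
      = m₁ ⊔ m₂ := by
  refine le_antisymm (generateFrom_le ?_) (sup_le (fun s hs => ?_) (fun s hs => ?_))
  · rintro _ ⟨A, hA, C, hC, rfl⟩
    exact (le_sup_left (b := m₂) _ hA).inter (le_sup_right (a := m₁) _ hC)
  · exact measurableSet_generateFrom ⟨s, hs, univ, .univ, inter_univ s⟩
  · exact measurableSet_generateFrom ⟨univ, .univ, s, hs, univ_inter s⟩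

end PiSystem

section SetIntegral

variable {Ω E : Type*} [NormedAddCommGroup E] [NormedSpace ℝ E] {m mΩ : MeasurableSpace Ω}
  {μ : Measure Ω}

lemma setIntegral_eq_of_isPiSystem {S : Set (Set Ω)} (hm : m ≤ mΩ) (h_gen : m = generateFrom S)
    (h_pi : IsPiSystem S) {f g : Ω → E} (hf : Integrable f μ) (hg : Integrable g μ)
    (h_univ : ∫ x, f x ∂μ = ∫ x, g x ∂μ)
    (h_basic : ∀ s ∈ S, ∫ x in s, f x ∂μ = ∫ x in s, g x ∂μ)
    {s : Set Ω} (hs : MeasurableSet[m] s) : ∫ x in s, f x ∂μ = ∫ x in s, g x ∂μ := by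
  induction s, hs using induction_on_inter h_gen h_pi with
  | empty => simp
  | basic s hs => exact h_basic s hs
  | compl s hs ih =>
    rw [setIntegral_compl (hm s hs) hf, setIntegral_compl (hm s hs) hg, h_univ, ih]
  | iUnion s hdisj hs ih =>
    rw [integral_iUnion (fun n => hm _ (hs n)) hdisj hf.integrableOn,
      integral_iUnion (fun n => hm _ (hs n)) hdisj hg.integrableOn]
    exact tsum_congr ih

lemma mul_indicator_one_eq_indicator {M : Type*} [MulZeroOneClass M] (f : Ω → M) (A : Set Ω) :
    f * A.indicator (fun _ => 1) = A.indicator f := by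
  ext x
  by_cases hx : x ∈ A <;> simp [hx]

lemma MeasureTheory.Integrable.mul_indicator_one {f : Ω → ℝ} (hf : Integrable f μ) {A : Set Ω}
    (hA : MeasurableSet A) : Integrable (f * A.indicator fun _ => 1) μ := by
  rw [mul_indicator_one_eq_indicator]
  exact hf.indicator hA

lemma setIntegral_inter_eq_setIntegral_mul_indicator {A C : Set Ω} (hA : MeasurableSet A)
    (f : Ω → ℝ) :
    ∫ x in A ∩ C, f x ∂μ = ∫ x in C, f x * A.indicator (fun _ => 1) x ∂μ := by
  rw [inter_comm, ← setIntegral_indicator hA, ← mul_indicator_one_eq_indicator]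
  rfl

lemma ae_norm_condExp_indicator_le_one (A : Set Ω) : ∀ᵐ x ∂μ, ‖(μ⟦A | m⟧) x‖ ≤ 1 := by
  have h_ind : ∀ᵐ x ∂μ, |A.indicator (fun _ => (1 : ℝ)) x| ≤ 1 :=
    .of_forall fun x => by by_cases hx : x ∈ A <;> simp [hx]
  filter_upwards [ae_bdd_abs_condExp_of_ae_bdd_abs (m := m) h_ind] with x hx
  rwa [Real.norm_eq_abs]

end SetIntegral

section CondExp

variable {Ω : Type*} {m mΩ : MeasurableSpace Ω} {μ : Measure Ω} [IsFiniteMeasure μ]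

lemma setIntegral_mul_condExp (hm : m ≤ mΩ) {C : Set Ω} (hC : MeasurableSet[m] C)
    {f g : Ω → ℝ} (hf : StronglyMeasurable[m] f) (hfg : Integrable (f * g) μ)
    (hg : Integrable g μ) :
    ∫ x in C, f x * μ[g | m] x ∂μ = ∫ x in C, f x * g x ∂μ := by
  refine (setIntegral_congr_ae (hm _ hC) ?_).trans (setIntegral_condExp hm hfg hC)
  filter_upwards [condExp_mul_of_stronglyMeasurable_left hf hfg hg] with x hx _ using hx.symm

lemma condExp_sup_ae_eq_of_setIntegral_inter {m₁ m₂ : MeasurableSpace Ω} (hm₁ : m₁ ≤ mΩ)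
    (hm₂ : m₂ ≤ mΩ) {f : Ω → ℝ} (hf : Integrable f μ)
    (h : ∀ A C, MeasurableSet[m₁] A → MeasurableSet[m₂] C →
      ∫ x in A ∩ C, μ[f | m₂] x ∂μ = ∫ x in A ∩ C, f x ∂μ) :
    μ[f | m₁ ⊔ m₂] =ᵐ[μ] μ[f | m₂] := by
  refine (ae_eq_condExp_of_forall_setIntegral_eq (sup_le hm₁ hm₂) hf
    (fun _ _ _ => integrable_condExp.integrableOn) (fun s hs _ => ?_)
    (stronglyMeasurable_condExp.mono (le_sup_right : m₂ ≤ m₁ ⊔ m₂)).aestronglyMeasurable).symm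
  refine setIntegral_eq_of_isPiSystem (sup_le hm₁ hm₂) (generateFrom_image2_inter m₁ m₂).symm
    (isPiSystem_image2_inter m₁ m₂) integrable_condExp hf (integral_condExp hm₂) ?_ hs
  rintro _ ⟨A, hA, C, hC, rfl⟩
  exact h A C hA hC

end CondExp

namespace ProbabilityTheory

variable {Ω : Type*} {m' m₁ m₂ mΩ : MeasurableSpace Ω} [StandardBorelSpace Ω]
  {hm' : m' ≤ mΩ} {μ : Measure Ω} [IsFiniteMeasure μ]

lemma CondIndep.condExp_indicator_sup_ae_eq (h : CondIndep m' m₁ m₂ hm' μ) (hm₁ : m₁ ≤ mΩ)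
    (hm₂ : m₂ ≤ mΩ) {t : Set Ω} (ht : MeasurableSet[m₁] t) :
    μ⟦t | m₂ ⊔ m'⟧ =ᵐ[μ] μ⟦t | m'⟧ := by
  have hprod := (condIndep_iff m' m₁ m₂ hm' hm₁ hm₂ μ).mp h
  refine condExp_sup_ae_eq_of_setIntegral_inter hm₂ hm'
    ((integrable_const 1).indicator (hm₁ _ ht)) fun A C hA hC => ?_
  have hA₀ := hm₂ _ hA
  calc ∫ x in A ∩ C, (μ⟦t | m'⟧) x ∂μ
      = ∫ x in C, (μ⟦t | m'⟧) x * A.indicator (fun _ => 1) x ∂μ :=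
        setIntegral_inter_eq_setIntegral_mul_indicator hA₀ _
    _ = ∫ x in C, (μ⟦t | m'⟧) x * (μ⟦A | m'⟧) x ∂μ :=
        (setIntegral_mul_condExp hm' hC stronglyMeasurable_condExp
          (integrable_condExp.mul_indicator_one hA₀) ((integrable_const 1).indicator hA₀)).symm
    _ = ∫ x in C, (μ⟦t ∩ A | m'⟧) x ∂μ :=
        setIntegral_congr_ae (hm' _ hC) <| by
          filter_upwards [hprod t A ht hA] with x hx _ using hx.symm
    _ = ∫ x in C, (t ∩ A).indicator (fun _ => (1 : ℝ)) x ∂μ :=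
        setIntegral_condExp hm' ((integrable_const 1).indicator ((hm₁ _ ht).inter hA₀)) hC
    _ = ∫ x in A ∩ C, t.indicator (fun _ => 1) x ∂μ := by
        rw [inter_comm t A, ← indicator_indicator, setIntegral_indicator hA₀, inter_comm]

theorem CondIndep.condExp_sup_ae_eq (h : CondIndep m' m₁ m₂ hm' μ) (hm₁ : m₁ ≤ mΩ)
    (hm₂ : m₂ ≤ mΩ) {f : Ω → ℝ} (hf : StronglyMeasurable[m₁] f) (hfi : Integrable f μ) :
    μ[f | m₂ ⊔ m'] =ᵐ[μ] μ[f | m'] := by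
  refine condExp_sup_ae_eq_of_setIntegral_inter hm₂ hm' hfi fun A C hA hC => ?_
  have hA₀ := hm₂ _ hA
  have hA_int : Integrable (A.indicator fun _ => (1 : ℝ)) μ := (integrable_const 1).indicator hA₀
  calc ∫ x in A ∩ C, μ[f | m'] x ∂μ
      = ∫ x in C, μ[f | m'] x * A.indicator (fun _ => 1) x ∂μ :=
        setIntegral_inter_eq_setIntegral_mul_indicator hA₀ _
    _ = ∫ x in C, μ[f | m'] x * (μ⟦A | m'⟧) x ∂μ :=
        (setIntegral_mul_condExp hm' hC stronglyMeasurable_condExp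
          (integrable_condExp.mul_indicator_one hA₀) hA_int).symm
    _ = ∫ x in C, (μ⟦A | m'⟧) x * f x ∂μ := by
        simp_rw [mul_comm (μ[f | m'] _)]
        exact setIntegral_mul_condExp hm' hC stronglyMeasurable_condExp
          (hfi.bdd_mul (stronglyMeasurable_condExp.mono hm').aestronglyMeasurable (ae_norm_condExp_indicator_le_one A)) hfi
    _ = ∫ x in C, f x * (μ⟦A | m₁ ⊔ m'⟧) x ∂μ := by
        simp_rw [mul_comm ((μ⟦A | m'⟧) _)]
        refine setIntegral_congr_ae (hm' _ hC) ?_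
        filter_upwards [h.symm.condExp_indicator_sup_ae_eq hm₂ hm₁ hA] with x hx _
        rw [hx]
    _ = ∫ x in C, f x * A.indicator (fun _ => 1) x ∂μ :=
        setIntegral_mul_condExp (sup_le hm₁ hm') (le_sup_right (a := m₁) _ hC)
          (hf.mono le_sup_left) (hfi.mul_indicator_one hA₀) hA_int
    _ = ∫ x in A ∩ C, f x ∂μ := (setIntegral_inter_eq_setIntegral_mul_indicator hA₀ _).symm

end ProbabilityTheory

theorem condexp_given_treated_via_rank_general
    {Ω : Type*} [mΩ : MeasurableSpace Ω] [StandardBorelSpace Ω]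
    (μ : Measure Ω) [IsProbabilityMeasure μ]
    {dw : ℕ} (B : Ω → Fin dw → ℝ)
    (hBmeas : Measurable B)
    (hBint : ∀ i, Integrable (fun ω => B ω i) μ)
    {𝒳 ℛ : Type*} [MeasurableSpace 𝒳] [MeasurableSpace ℛ]
    (Xt : Ω → 𝒳) (R : Ω → ℛ) (hXt : Measurable Xt) (hR : Measurable R)
    (hci : CondIndepFun (MeasurableSpace.comap R inferInstance) hR.comap_le B Xt μ) :
    (∀ i, μ[fun ω => B ω i | MeasurableSpace.comap (fun ω => (Xt ω, R ω)) inferInstance]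
        =ᵐ[μ] μ[fun ω => B ω i | MeasurableSpace.comap R inferInstance])
    ∧ (∀ i, μ[fun ω => B ω i | MeasurableSpace.comap Xt inferInstance]
        =ᵐ[μ] μ[μ[fun ω => B ω i | MeasurableSpace.comap R inferInstance]
          | MeasurableSpace.comap Xt inferInstance]) := by
  have h_sup (i : Fin dw) :
      μ[fun ω => B ω i |
          MeasurableSpace.comap Xt inferInstance ⊔ MeasurableSpace.comap R inferInstance]
        =ᵐ[μ] μ[fun ω => B ω i | MeasurableSpace.comap R inferInstance] :=
    ((condIndepFun_iff_condIndep _ _ B Xt μ).mp hci).condExp_sup_ae_eq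
      hBmeas.comap_le hXt.comap_le
      ((measurable_pi_apply i).comp (comap_measurable B)).stronglyMeasurable (hBint i)
  refine ⟨fun i => comap_prodMk Xt R ▸ h_sup i, fun i => ?_⟩
  exact (condExp_condExp_of_le le_sup_left (sup_le hXt.comap_le hR.comap_le)).symm.trans
    (condExp_congr_ae (h_sup i))

/-- If the integrable random vector `B` and the random vector `X̃` are
conditionally independent given `σ(R)`, then `E[B | σ(X̃, R)] = E[B | σ(R)]` a.s., and by
the tower property `E[B | σ(X̃)] = E[E[B | σ(R)] | σ(X̃)]` a.s. (This is the key step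
identifying the 'average effect of treatment on the treated' in the CRC model.) -/
theorem condexp_given_treated_via_rank
    {Ω : Type*} [mΩ : MeasurableSpace Ω] [StandardBorelSpace Ω] [Nonempty Ω]
    (μ : Measure Ω) [IsProbabilityMeasure μ]
    {dw : ℕ} (B : Ω → Fin dw → ℝ)
    (hBmeas : Measurable B)
    (hBint : ∀ i, Integrable (fun ω => B ω i) μ)
    {𝒳 ℛ : Type*} [MeasurableSpace 𝒳] [MeasurableSpace ℛ]
    (Xt : Ω → 𝒳) (R : Ω → ℛ) (hXt : Measurable Xt) (hR : Measurable R)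
    (hci : CondIndepFun (MeasurableSpace.comap R inferInstance) hR.comap_le B Xt μ) :
    (∀ i, μ[fun ω => B ω i | MeasurableSpace.comap (fun ω => (Xt ω, R ω)) inferInstance]
        =ᵐ[μ] μ[fun ω => B ω i | MeasurableSpace.comap R inferInstance])
    ∧ (∀ i, μ[fun ω => B ω i | MeasurableSpace.comap Xt inferInstance]
        =ᵐ[μ] μ[μ[fun ω => B ω i | MeasurableSpace.comap R inferInstance]
          | MeasurableSpace.comap Xt inferInstance]) :=
  condexp_given_treated_via_rank_general (mΩ := mΩ) μ B hBmeas hBint Xt R hXt hR hci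
end

section
/- Suppose that on a probability space: Z is a random vector in ℝ^{d_z}; V = (V₁,…,V_{d_b}) is a random vector each of whose real components V_k has an atomless (continuous) distribution; for each k = 1,…,d_b, h_k : ℝ^{d_z} × ℝ → ℝ is measurable and strictly increasing in its second argument and X_k = h_k(Z, V_k); B is a random vector in ℝ^{d_w}; and (B, V) is independent of Z. Let R_k = F_{X_k|Z}(X_k | Z) for k = 1,…,d_b, where F_{X_k|Z}(·|z) is a regular conditional distribution function of X_k given Z = z, and set R = (R₁,…,R_{d_b}). Then the pair (R, B) is independent of Z. -/
open MeasureTheory ProbabilityTheory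

/-- `F` is a regular conditional distribution function of the real random variable `X` given
the random element `Z`: for each conditioning value `z`, `F z` is monotone and
right-continuous, `F · x` is measurable, and `fun ω => F (Z ω) x` is a version of the
conditional probability `P(X ≤ x | σ(Z))` for every `x`. -/
def IsRegCondCDF {Ω ζ : Type*} [MeasurableSpace Ω] [MeasurableSpace ζ]
    (μ : MeasureTheory.Measure Ω) (X : Ω → ℝ) (Z : Ω → ζ) (F : ζ → ℝ → ℝ) : Prop :=
  (∀ z, Monotone (F z)) ∧
  (∀ z x, ContinuousWithinAt (F z) (Set.Ici x) x) ∧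
  (∀ x, Measurable fun z => F z x) ∧
  (∀ x : ℝ, (fun ω => F (Z ω) x)
    =ᵐ[μ] μ[Set.indicator {ω | X ω ≤ x} (fun _ => (1 : ℝ))
      | MeasurableSpace.comap Z inferInstance])

/-!
By independence of `V_k` and `Z`, the conditional probability `P(X_k ≤ x | Z)` is the
distribution function of `h_k(z, V_k)` evaluated at `x`, with `z = Z`. Two right-continuous
distribution functions that agree at every rational agree everywhere, so almost surely
`F_{X_k|Z}(· | Z)` is that distribution function, and strict monotonicity of `h_k(z, ·)` turns
`R_k = F_{X_k|Z}(h_k(Z, V_k) | Z)` into `F_{V_k}(V_k)`. Hence `(R, B)` is almost surely a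
measurable function of `(B, V)`, which is independent of `Z`.
-/

open Filter Topology Set

section CondDistrib

variable {Ω ζ β : Type*} [MeasurableSpace Ω] [MeasurableSpace ζ] [MeasurableSpace β]
  [StandardBorelSpace β] [Nonempty β] {μ : Measure Ω} [IsFiniteMeasure μ]
  {Z : Ω → ζ} {W : Ω → β}

lemma ProbabilityTheory.IndepFun.condDistrib_ae_eq_const (hZ : Measurable Z) (hW : Measurable W)
    (hindep : IndepFun W Z μ) :
    condDistrib W Z μ =ᵐ[μ.map Z] Kernel.const ζ (μ.map W) := by
  rw [condDistrib_ae_eq_iff_measure_eq_compProd Z hW.aemeasurable, Measure.compProd_const]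
  exact (indepFun_iff_map_prod_eq_prod_map_map hZ.aemeasurable hW.aemeasurable).mp hindep.symm

lemma ProbabilityTheory.IndepFun.condExp_indicator_prod_ae_eq (hZ : Measurable Z)
    (hW : Measurable W) (hindep : IndepFun W Z μ) {S : Set (ζ × β)} (hS : MeasurableSet S) :
    μ[((fun ω => (Z ω, W ω)) ⁻¹' S).indicator (fun _ => (1 : ℝ))
      | MeasurableSpace.comap Z inferInstance]
      =ᵐ[μ] fun ω => (μ.map W).real (Prod.mk (Z ω) ⁻¹' S) := by
  have hcond := condExp_prod_ae_eq_integral_condDistrib (μ := μ) hZ hW.aemeasurable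
    (f := S.indicator (fun _ => (1 : ℝ))) (stronglyMeasurable_const.indicator hS)
    ((integrable_const (1 : ℝ)).indicator (hS.preimage (hZ.prodMk hW)))
  filter_upwards [hcond, ae_of_ae_map hZ.aemeasurable (hindep.condDistrib_ae_eq_const hZ hW)]
    with ω hω hκ
  rw [Kernel.const_apply] at hκ
  rw [← integral_indicator_one (measurable_prodMk_left hS), ← hκ]
  exact hω

end CondDistrib

lemma eq_of_forall_rat_of_continuousWithinAt_Ici {f g : ℝ → ℝ}
    (hf : ∀ x, ContinuousWithinAt f (Ici x) x) (hg : ∀ x, ContinuousWithinAt g (Ici x) x)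
    (hfg : ∀ q : ℚ, f q = g q) : f = g := by
  funext x
  obtain ⟨u, -, hux, hu⟩ := Real.exists_seq_rat_strictAnti_tendsto x
  have hu' : Tendsto (fun n => (u n : ℝ)) atTop (𝓝[≥] x) :=
    tendsto_nhdsWithin_iff.2 ⟨hu, Eventually.of_forall fun n => (hux n).le⟩
  refine tendsto_nhds_unique ((hf x).tendsto.comp hu') ?_
  simpa only [Function.comp_def, hfg] using (hg x).tendsto.comp hu'

lemma ProbabilityTheory.cdf_map_apply_of_strictMono {ν : Measure ℝ} [IsProbabilityMeasure ν]
    {f : ℝ → ℝ} (hf : StrictMono f) (x : ℝ) : cdf (ν.map f) (f x) = cdf ν x := by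
  have hfm : Measurable f := hf.monotone.measurable
  have : IsProbabilityMeasure (ν.map f) := Measure.isProbabilityMeasure_map hfm.aemeasurable
  rw [cdf_eq_real, cdf_eq_real, map_measureReal_apply hfm measurableSet_Iic]
  congr 1
  ext v
  exact hf.le_iff_le

section CondRank

variable {Ω ζ : Type*} [MeasurableSpace Ω] [MeasurableSpace ζ] {μ : Measure Ω}
  [IsProbabilityMeasure μ] {Z : Ω → ζ} {W : Ω → ℝ} {h F : ζ → ℝ → ℝ}

lemma ProbabilityTheory.IndepFun.condExp_le_ae_eq_cdf_map (hZ : Measurable Z)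
    (hW : Measurable W) (hh : Measurable fun p : ζ × ℝ => h p.1 p.2) (hindep : IndepFun W Z μ)
    (x : ℝ) :
    μ[{ω | h (Z ω) (W ω) ≤ x}.indicator (fun _ => (1 : ℝ))
      | MeasurableSpace.comap Z inferInstance]
      =ᵐ[μ] fun ω => cdf ((μ.map W).map (h (Z ω))) x := by
  have : IsProbabilityMeasure (μ.map W) := Measure.isProbabilityMeasure_map hW.aemeasurable
  have hS : MeasurableSet {p : ζ × ℝ | h p.1 p.2 ≤ x} := measurableSet_le hh measurable_const
  filter_upwards [hindep.condExp_indicator_prod_ae_eq hZ hW hS] with ω hω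
  refine hω.trans ?_
  have hhz : Measurable (h (Z ω)) := hh.of_uncurry_left
  have := Measure.isProbabilityMeasure_map (μ := μ.map W) hhz.aemeasurable
  rw [cdf_eq_real, map_measureReal_apply hhz measurableSet_Iic]
  rfl

lemma IsRegCondCDF.ae_eq_cdf_map (hZ : Measurable Z) (hW : Measurable W)
    (hh : Measurable fun p : ζ × ℝ => h p.1 p.2) (hindep : IndepFun W Z μ)
    (hF : IsRegCondCDF μ (fun ω => h (Z ω) (W ω)) Z F) :
    ∀ᵐ ω ∂μ, F (Z ω) = cdf ((μ.map W).map (h (Z ω))) := by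
  obtain ⟨-, hFcont, -, hFcond⟩ := hF
  have hrat : ∀ᵐ ω ∂μ, ∀ q : ℚ, F (Z ω) q = cdf ((μ.map W).map (h (Z ω))) q :=
    ae_all_iff.2 fun q => (hFcond q).trans (hindep.condExp_le_ae_eq_cdf_map hZ hW hh q)
  filter_upwards [hrat] with ω hω
  exact eq_of_forall_rat_of_continuousWithinAt_Ici (hFcont _) (cdf _).right_continuous hω

lemma IsRegCondCDF.ae_apply_eq_cdf (hZ : Measurable Z) (hW : Measurable W)
    (hh : Measurable fun p : ζ × ℝ => h p.1 p.2) (hmono : ∀ z, StrictMono (h z))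
    (hindep : IndepFun W Z μ)
    (hF : IsRegCondCDF μ (fun ω => h (Z ω) (W ω)) Z F) :
    ∀ᵐ ω ∂μ, F (Z ω) (h (Z ω) (W ω)) = cdf (μ.map W) (W ω) := by
  have : IsProbabilityMeasure (μ.map W) := Measure.isProbabilityMeasure_map hW.aemeasurable
  filter_upwards [hF.ae_eq_cdf_map hZ hW hh hindep] with ω hω
  rw [hω, cdf_map_apply_of_strictMono (hmono _)]

end CondRank

theorem rank_and_coefficients_indep_of_instrument_general
    {Ω : Type*} [MeasurableSpace Ω] (μ : Measure Ω) [IsProbabilityMeasure μ]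
    {dz db dw : ℕ}
    (Z : Ω → Fin dz → ℝ) (hZ : Measurable Z)
    (V : Ω → Fin db → ℝ) (hV : Measurable V)
    (h : Fin db → (Fin dz → ℝ) → ℝ → ℝ)
    (hhmeas : ∀ k, Measurable fun p : (Fin dz → ℝ) × ℝ => h k p.1 p.2)
    (hhmono : ∀ k z, StrictMono (h k z))
    (X : Fin db → Ω → ℝ)
    (hX : ∀ k, X k = fun ω => h k (Z ω) (V ω k))
    (B : Ω → Fin dw → ℝ)
    (hindep : IndepFun (fun ω => (B ω, V ω)) Z μ)
    (F : Fin db → (Fin dz → ℝ) → ℝ → ℝ)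
    (hF : ∀ k, IsRegCondCDF μ (X k) Z (F k))
    (R : Ω → Fin db → ℝ)
    (hR : R = fun ω k => F k (Z ω) (X k ω)) :
    IndepFun (fun ω => (R ω, B ω)) Z μ := by
  set c : Fin db → StieltjesFunction ℝ := fun k => cdf (μ.map fun ω => V ω k)
  have hRk : ∀ k, ∀ᵐ ω ∂μ, R ω k = c k (V ω k) := fun k => by
    have hFk := hF k
    rw [hX k] at hFk
    filter_upwards [hFk.ae_apply_eq_cdf hZ hV.eval (hhmeas k) (hhmono k)
      (hindep.comp ((measurable_pi_apply k).comp measurable_snd) measurable_id)] with ω hω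
    simpa only [hR, hX k] using hω
  have hrank : (fun ω => (R ω, B ω)) =ᵐ[μ] fun ω => (fun k => c k (V ω k), B ω) := by
    filter_upwards [ae_all_iff.2 hRk] with ω hω
    rw [funext hω]
  have hφ : Measurable fun p : (Fin dw → ℝ) × (Fin db → ℝ) =>
      ((fun k => c k (p.2 k)), p.1) :=
    (measurable_pi_lambda _ fun k => (c k).mono.measurable.comp
      ((measurable_pi_apply k).comp measurable_snd)).prodMk measurable_fst
  exact (hindep.comp hφ measurable_id).congr hrank.symm EventuallyEq.rfl

/-- Proposition 1, first part. Suppose `X_k = h_k(Z, V_k)` with each `h_k`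
strictly increasing in its second argument, each `V_k` atomless, and `(B, V)` independent of
`Z`. Let `R_k = F_{X_k|Z}(X_k | Z)` be the conditional ranks. Then the pair `(R, B)` is
independent of `Z`. -/
theorem rank_and_coefficients_indep_of_instrument
    {Ω : Type*} [MeasurableSpace Ω] (μ : Measure Ω) [IsProbabilityMeasure μ]
    {dz db dw : ℕ}
    (Z : Ω → Fin dz → ℝ) (hZ : Measurable Z)
    (V : Ω → Fin db → ℝ) (hV : Measurable V)
    (hVatomless : ∀ (k : Fin db) (v : ℝ), μ {ω | V ω k = v} = 0)
    (h : Fin db → (Fin dz → ℝ) → ℝ → ℝ)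
    (hhmeas : ∀ k, Measurable fun p : (Fin dz → ℝ) × ℝ => h k p.1 p.2)
    (hhmono : ∀ k z, StrictMono (h k z))
    (X : Fin db → Ω → ℝ)
    (hX : ∀ k, X k = fun ω => h k (Z ω) (V ω k))
    (B : Ω → Fin dw → ℝ) (hB : Measurable B)
    (hindep : IndepFun (fun ω => (B ω, V ω)) Z μ)
    (F : Fin db → (Fin dz → ℝ) → ℝ → ℝ)
    (hF : ∀ k, IsRegCondCDF μ (X k) Z (F k))
    (R : Ω → Fin db → ℝ)
    (hR : R = fun ω k => F k (Z ω) (X k ω)) :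
    IndepFun (fun ω => (R ω, B ω)) Z μ :=
  rank_and_coefficients_indep_of_instrument_general μ Z hZ V hV h hhmeas hhmono X hX B hindep F hF R
    hR
end
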